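/- arXiv:2305.05017 — 3 statements merged into one kernel-verified Lean document; each statement's English description precedes it below -/
import Mathlib

section
/- Fix z, z' ∈ {0,1} with z ≠ z'. Assume Assumption (1) and Assumption (3), and fix v ∈ 𝒱 and c ∈ 𝒞 such that P(V_z = v, Z = z, C = c) > 0 and such that P(V_{z'} = v', Z = z', C = c) > 0 for every v' ∈ 𝒱. Then for every m' ∈ ℳ: P(M_{z'} = m' | V_z = v, Z = z, C = c) = Σ_{v' ∈ 𝒱} P(M_{z'} = m' | V_{z'} = v', Z = z', C = c) · P(V_{z'} = v' | V_z = v, Z = z, C = c). -/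
/-!
Given `C = c`, ignorability makes the joint law of `(M_{z'}, V_z, V_{z'})` the same on the arms
`Z = z` and `Z = z'`, so probabilities of events about these variables can be moved from one arm
to the other. Moving to the arm `Z = z'`, applying cross-world independence there and moving
back gives
`P(M_{z'} = m' | V_z = v, V_{z'} = v', Z = z, C = c) = P(M_{z'} = m' | V_{z'} = v', Z = z', C = c)`,
and the law of total probability over `v'` yields the formula.
-/

open MeasureTheory ProbabilityTheory

/-- Conditional probability `P(A | B) = P(A ∩ B) / P(B)`. -/
noncomputable def cProb {Ω : Type*} [MeasurableSpace Ω] (P : Measure Ω) (A B : Set Ω) : ℝ :=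
  (P (A ∩ B)).toReal / (P B).toReal

open Set

section

variable {Ω : Type*} [MeasurableSpace Ω] {P : Measure Ω} [IsFiniteMeasure P]

lemma measureReal_inter_mul_eq_of_cProb_eq_mul {A S T B : Set Ω}
    (h : cProb P A B = cProb P S B * cProb P T B) :
    P.real (A ∩ B) * P.real B = P.real (S ∩ B) * P.real (T ∩ B) := by
  by_cases hB : P.real B = 0
  · simp [hB, measureReal_mono_null inter_subset_right hB]
  · simp only [cProb, ← measureReal_def] at h
    field_simp at h
    linear_combination h

lemma measureReal_inter_mul_comm_of_cProb_eq_mul {A₁ A₂ S T₁ T₂ B : Set Ω}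
    (h₁ : cProb P A₁ B = cProb P S B * cProb P T₁ B)
    (h₂ : cProb P A₂ B = cProb P S B * cProb P T₂ B) :
    P.real (A₁ ∩ B) * P.real (T₂ ∩ B) = P.real (A₂ ∩ B) * P.real (T₁ ∩ B) := by
  by_cases hB : P.real B = 0
  · simp [measureReal_mono_null inter_subset_right hB]
  · refine mul_right_cancel₀ hB ?_
    linear_combination P.real (T₂ ∩ B) * measureReal_inter_mul_eq_of_cProb_eq_mul h₁
      - P.real (T₁ ∩ B) * measureReal_inter_mul_eq_of_cProb_eq_mul h₂

variable {β : Type*} [Fintype β] [MeasurableSpace β] [MeasurableSingletonClass β]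
  {Y : Ω → β}

lemma sum_measureReal_fiber_inter (hY : Measurable Y) (S : Set Ω) :
    ∑ y, P.real ({ω | Y ω = y} ∩ S) = P.real S := by
  have h := sum_measureReal_preimage_singleton (μ := P.restrict S) Finset.univ
    fun y _ => hY (measurableSet_singleton y)
  simp only [measureReal_restrict_apply (hY (measurableSet_singleton _)), Finset.coe_univ,
    preimage_univ, measureReal_restrict_apply_univ] at h
  exact h

lemma measureReal_mul_eq_of_forall_fiber (hY : Measurable Y) {S₁ S₂ : Set Ω} {a b : ℝ}
    (h : ∀ y, P.real ({ω | Y ω = y} ∩ S₁) * a = P.real ({ω | Y ω = y} ∩ S₂) * b) :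
    P.real S₁ * a = P.real S₂ * b := by
  rw [← sum_measureReal_fiber_inter hY S₁, ← sum_measureReal_fiber_inter hY S₂,
    Finset.sum_mul, Finset.sum_mul]
  exact Finset.sum_congr rfl fun y _ => h y

lemma cProb_eq_sum_cProb_mul_cProb (hY : Measurable Y) {A D : Set Ω} {G : β → Set Ω}
    (hG : ∀ y, P.real (G y) ≠ 0)
    (h : ∀ y, P.real ({ω | Y ω = y} ∩ (A ∩ D)) * P.real (G y)
      = P.real (A ∩ G y) * P.real ({ω | Y ω = y} ∩ D)) :
    cProb P A D = ∑ y, cProb P A (G y) * cProb P {ω | Y ω = y} D := by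
  simp only [cProb, ← measureReal_def]
  rw [← sum_measureReal_fiber_inter hY (A ∩ D), Finset.sum_div]
  refine Finset.sum_congr rfl fun y _ => ?_
  rw [div_mul_div_comm, ← h y, mul_comm _ (P.real (G y)), mul_div_mul_left _ _ (hG y)]

end

section

variable {Ω α β ℳ τ : Type*} [MeasurableSpace Ω] {P : Measure Ω} [IsFiniteMeasure P]
  [Fintype ℳ] [MeasurableSpace ℳ] [MeasurableSingletonClass ℳ]
  {W : Ω → ℳ} {X : Ω → α} {Y : Ω → β} {Z : Ω → τ} {B : Set Ω}

lemma measureReal_inter_mul_eq_of_ignorable_of_crossworld (hW : Measurable W)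
    {m : ℳ} {x : α} {y : β} {t t' : τ}
    (hign : ∀ n s, cProb P {ω | W ω = n ∧ X ω = x ∧ Y ω = y ∧ Z ω = s} B
      = cProb P {ω | W ω = n ∧ X ω = x ∧ Y ω = y} B * cProb P {ω | Z ω = s} B)
    (hcross : cProb P {ω | W ω = m ∧ X ω = x} {ω | Y ω = y ∧ Z ω = t' ∧ ω ∈ B}
      = cProb P {ω | W ω = m} {ω | Y ω = y ∧ Z ω = t' ∧ ω ∈ B}
        * cProb P {ω | X ω = x} {ω | Y ω = y ∧ Z ω = t' ∧ ω ∈ B}) :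
    P.real ({ω | Y ω = y} ∩ ({ω | W ω = m} ∩ {ω | X ω = x ∧ Z ω = t ∧ ω ∈ B}))
        * P.real {ω | Y ω = y ∧ Z ω = t' ∧ ω ∈ B}
      = P.real ({ω | W ω = m} ∩ {ω | Y ω = y ∧ Z ω = t' ∧ ω ∈ B})
        * P.real ({ω | Y ω = y} ∩ {ω | X ω = x ∧ Z ω = t ∧ ω ∈ B}) := by
  have hswap : ∀ n, P.real ({ω | W ω = n ∧ X ω = x ∧ Y ω = y ∧ Z ω = t} ∩ B)
      * P.real ({ω | Z ω = t'} ∩ B)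
      = P.real ({ω | W ω = n ∧ X ω = x ∧ Y ω = y ∧ Z ω = t'} ∩ B)
        * P.real ({ω | Z ω = t} ∩ B) := fun n =>
    measureReal_inter_mul_comm_of_cProb_eq_mul (hign n t) (hign n t')
  have hswapXY : P.real ({ω | X ω = x ∧ Y ω = y ∧ Z ω = t} ∩ B) * P.real ({ω | Z ω = t'} ∩ B)
      = P.real ({ω | X ω = x ∧ Y ω = y ∧ Z ω = t'} ∩ B) * P.real ({ω | Z ω = t} ∩ B) :=
    measureReal_mul_eq_of_forall_fiber hW fun n => by
      rw [← inter_assoc, ← inter_assoc]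
      exact hswap n
  have hcross' : P.real ({ω | W ω = m ∧ X ω = x ∧ Y ω = y ∧ Z ω = t'} ∩ B)
        * P.real {ω | Y ω = y ∧ Z ω = t' ∧ ω ∈ B}
      = P.real ({ω | W ω = m} ∩ {ω | Y ω = y ∧ Z ω = t' ∧ ω ∈ B})
        * P.real ({ω | X ω = x ∧ Y ω = y ∧ Z ω = t'} ∩ B) := by
    convert measureReal_inter_mul_eq_of_cProb_eq_mul hcross using 3 <;>
      ext ω <;> simp only [mem_inter_iff, mem_ofPred_eq] <;> tauto
  suffices h : P.real ({ω | W ω = m ∧ X ω = x ∧ Y ω = y ∧ Z ω = t} ∩ B)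
        * P.real {ω | Y ω = y ∧ Z ω = t' ∧ ω ∈ B}
      = P.real ({ω | W ω = m} ∩ {ω | Y ω = y ∧ Z ω = t' ∧ ω ∈ B})
        * P.real ({ω | X ω = x ∧ Y ω = y ∧ Z ω = t} ∩ B) by
    convert h using 3 <;> ext ω <;> simp only [mem_inter_iff, mem_ofPred_eq] <;> tauto
  rcases eq_or_ne (P.real ({ω | Z ω = t'} ∩ B)) 0 with hZ | hZ
  · have hG : P.real {ω | Y ω = y ∧ Z ω = t' ∧ ω ∈ B} = 0 :=
      measureReal_mono_null (fun ω h => h.2) hZ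
    simp [hG, measureReal_mono_null inter_subset_right hG]
  · -- with `p = P(Z = t, B)`: `a f p' = a' p f = e b' p = e b p'`
    refine mul_right_cancel₀ hZ ?_
    linear_combination P.real {ω | Y ω = y ∧ Z ω = t' ∧ ω ∈ B} * hswap m
      + P.real ({ω | Z ω = t} ∩ B) * hcross'
      - P.real ({ω | W ω = m} ∩ {ω | Y ω = y ∧ Z ω = t' ∧ ω ∈ B}) * hswapXY

end

theorem crossworld_mediator_identification_general
    {Ω 𝒱 ℳ 𝒞 : Type*} [MeasurableSpace Ω]
    [Fintype 𝒱] [MeasurableSpace 𝒱] [MeasurableSingletonClass 𝒱]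
    [Fintype ℳ] [MeasurableSpace ℳ] [MeasurableSingletonClass ℳ]
    (P : Measure Ω) [IsProbabilityMeasure P]
    (Z : Ω → Bool) (C : Ω → 𝒞) (V : Bool → Ω → 𝒱) (M : Bool → Ω → ℳ)
    (hV : ∀ zb, Measurable (V zb)) (hM : ∀ zb, Measurable (M zb))
    (z z' : Bool)
    -- Assumption (1): ignorable treatment assignment given baseline confounders
    (h1 : ∀ (za zb : Bool) (m₂ : ℳ) (v₁ v₂ : 𝒱) (z'' : Bool) (c : 𝒞),
      0 < P {ω | C ω = c} →
      cProb P {ω | M zb ω = m₂ ∧ V za ω = v₁ ∧ V zb ω = v₂ ∧ Z ω = z''} {ω | C ω = c}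
        = cProb P {ω | M zb ω = m₂ ∧ V za ω = v₁ ∧ V zb ω = v₂} {ω | C ω = c}
          * cProb P {ω | Z ω = z''} {ω | C ω = c})
    -- Assumption (3): conditional cross-world independence of `V_z` and `M_{z'}`
    (h3 : ∀ (v' : 𝒱) (c : 𝒞),
      0 < P {ω | V z' ω = v' ∧ Z ω = z' ∧ C ω = c} →
      ∀ (m' : ℳ) (v : 𝒱),
      cProb P {ω | M z' ω = m' ∧ V z ω = v} {ω | V z' ω = v' ∧ Z ω = z' ∧ C ω = c}
        = cProb P {ω | M z' ω = m'} {ω | V z' ω = v' ∧ Z ω = z' ∧ C ω = c}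
          * cProb P {ω | V z ω = v} {ω | V z' ω = v' ∧ Z ω = z' ∧ C ω = c})
    (v : 𝒱) (c : 𝒞)
    (hpos' : ∀ v' : 𝒱, 0 < P {ω | V z' ω = v' ∧ Z ω = z' ∧ C ω = c}) :
    ∀ m' : ℳ,
      cProb P {ω | M z' ω = m'} {ω | V z ω = v ∧ Z ω = z ∧ C ω = c}
        = ∑ v' : 𝒱,
            cProb P {ω | M z' ω = m'} {ω | V z' ω = v' ∧ Z ω = z' ∧ C ω = c}
              * cProb P {ω | V z' ω = v'} {ω | V z ω = v ∧ Z ω = z ∧ C ω = c} := by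
  intro m'
  have hC : 0 < P {ω | C ω = c} := (hpos' v).trans_le (measure_mono fun ω h => h.2.2)
  refine cProb_eq_sum_cProb_mul_cProb (hV z')
    (fun v' => (measureReal_ne_zero_iff).2 (hpos' v').ne') fun v' => ?_
  exact measureReal_inter_mul_eq_of_ignorable_of_crossworld (hM z')
    (fun m s => h1 z z' m v v' s c hC) (h3 v' c (hpos' v') m' v)

/-- Theorem 3.1 of the paper (finite-valued version): under ignorable treatment assignment
given baseline confounders (Assumption (1)) and conditional cross-world independence between
the post-treatment confounder and the mediator (Assumption (3)), the cross-world mediator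
distribution is identified by marginalizing over the conditional distribution of `V_{z'}`
given `V_z`. -/
theorem crossworld_mediator_identification
    {Ω 𝒱 ℳ 𝒞 : Type*} [MeasurableSpace Ω]
    [Fintype 𝒱] [MeasurableSpace 𝒱] [MeasurableSingletonClass 𝒱]
    [Fintype ℳ] [MeasurableSpace ℳ] [MeasurableSingletonClass ℳ]
    [Fintype 𝒞] [MeasurableSpace 𝒞] [MeasurableSingletonClass 𝒞]
    (P : Measure Ω) [IsProbabilityMeasure P]
    (Z : Ω → Bool) (C : Ω → 𝒞) (V : Bool → Ω → 𝒱) (M : Bool → Ω → ℳ)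
    (hZ : Measurable Z) (hC : Measurable C)
    (hV : ∀ zb, Measurable (V zb)) (hM : ∀ zb, Measurable (M zb))
    (z z' : Bool) (hzz' : z ≠ z')
    -- Assumption (1): ignorable treatment assignment given baseline confounders
    (h1 : ∀ (za zb : Bool) (m₂ : ℳ) (v₁ v₂ : 𝒱) (z'' : Bool) (c : 𝒞),
      0 < P {ω | C ω = c} →
      cProb P {ω | M zb ω = m₂ ∧ V za ω = v₁ ∧ V zb ω = v₂ ∧ Z ω = z''} {ω | C ω = c}
        = cProb P {ω | M zb ω = m₂ ∧ V za ω = v₁ ∧ V zb ω = v₂} {ω | C ω = c}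
          * cProb P {ω | Z ω = z''} {ω | C ω = c})
    -- Assumption (3): conditional cross-world independence of `V_z` and `M_{z'}`
    (h3 : ∀ (v' : 𝒱) (c : 𝒞),
      0 < P {ω | V z' ω = v' ∧ Z ω = z' ∧ C ω = c} →
      ∀ (m' : ℳ) (v : 𝒱),
      cProb P {ω | M z' ω = m' ∧ V z ω = v} {ω | V z' ω = v' ∧ Z ω = z' ∧ C ω = c}
        = cProb P {ω | M z' ω = m'} {ω | V z' ω = v' ∧ Z ω = z' ∧ C ω = c}
          * cProb P {ω | V z ω = v} {ω | V z' ω = v' ∧ Z ω = z' ∧ C ω = c})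
    (v : 𝒱) (c : 𝒞)
    (hpos : 0 < P {ω | V z ω = v ∧ Z ω = z ∧ C ω = c})
    (hpos' : ∀ v' : 𝒱, 0 < P {ω | V z' ω = v' ∧ Z ω = z' ∧ C ω = c}) :
    ∀ m' : ℳ,
      cProb P {ω | M z' ω = m'} {ω | V z ω = v ∧ Z ω = z ∧ C ω = c}
        = ∑ v' : 𝒱,
            cProb P {ω | M z' ω = m'} {ω | V z' ω = v' ∧ Z ω = z' ∧ C ω = c}
              * cProb P {ω | V z' ω = v'} {ω | V z ω = v ∧ Z ω = z ∧ C ω = c} :=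
  crossworld_mediator_identification_general P Z C V M hV hM z z' h1 h3 v c hpos'
end

section
/- Fix z, z' ∈ {0,1} with z ≠ z'. Assume Assumptions (1), (2) and (3), and fix v ∈ 𝒱 and c ∈ 𝒞 such that P(V_z = v, Z = z, C = c) > 0, such that P(V_{z'} = v', Z = z', C = c) > 0 for every v' ∈ 𝒱, and such that P(M_z = m', V_z = v, Z = z, C = c) > 0 for every m' ∈ ℳ. Then E[Y_{z,M_{z'}} | V_z = v, C = c] = Σ_{v' ∈ 𝒱} Σ_{m' ∈ ℳ} E[Y_{z,m'} | M_z = m', V_z = v, Z = z, C = c] · P(M_{z'} = m' | V_{z'} = v', Z = z', C = c) · P(V_{z'} = v' | V_z = v, Z = z, C = c). -/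
open MeasureTheory ProbabilityTheory

/-- Conditional expectation `E[X | B] = E[X · 1_B] / P(B)`. -/
noncomputable def cExp {Ω : Type*} [MeasurableSpace Ω] (P : Measure Ω) (X : Ω → ℝ)
    (B : Set Ω) : ℝ :=
  (∫ ω in B, X ω ∂P) / (P B).toReal

/-!
Split `Y_{z,M_{z'}}` along the value `m'` of `M_{z'}`. By Assumption (1) the event `Z = z` can be
added to the conditioning event `{V_z = v, C = c}`; by Assumption (2) the mean of
`Y_{z,m'} · 1{M_{z'} = m'}` given `D = {V_z = v, Z = z, C = c}` then factors as
`E[Y_{z,m'} | D] · P(M_{z'} = m' | D)`, and `E[Y_{z,m'} | D] = E[Y_{z,m'} | M_z = m', D]`.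
Finally `P(M_{z'} = m' | D)` is summed over the value `v'` of `V_{z'}`: Assumption (1) moves each
summand from the arm `Z = z` to the arm `Z = z'`, where Assumption (3) factors it.
-/

open Set

section ConditionalIndependence

variable {Ω : Type*} [MeasurableSpace Ω] {P : Measure Ω} {A B B' S W : Set Ω}

/-- Conditional independence of the events `A` and `B` given `S`, with the denominators cleared so
that it also makes sense when `P S = 0`. -/
def IndepSetGiven (P : Measure Ω) (A B S : Set Ω) : Prop :=
  P.real (A ∩ (B ∩ S)) * P.real S = P.real (A ∩ S) * P.real (B ∩ S)

theorem IndepSetGiven.symm (h : IndepSetGiven P A B S) : IndepSetGiven P B A S := by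
  rw [IndepSetGiven, inter_left_comm, h, mul_comm]

theorem indepSetGiven_empty_left : IndepSetGiven P ∅ B S := by
  simp [IndepSetGiven]

theorem indepSetGiven_of_cProb_eq (hS : P.real S ≠ 0)
    (h : cProb P (A ∩ B) S = cProb P A S * cProb P B S) : IndepSetGiven P A B S := by
  simp only [cProb, ← measureReal_def, inter_assoc] at h
  field_simp at h
  rw [IndepSetGiven, h, mul_comm]

theorem measureReal_eq_sum_preimage_singleton_inter [IsFiniteMeasure P] {α : Type*} [Fintype α]
    [MeasurableSpace α] [MeasurableSingletonClass α] {g : Ω → α} (hg : Measurable g) (X : Set Ω) :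
    P.real X = ∑ a, P.real (g ⁻¹' {a} ∩ X) := by
  have hfib : ∀ a, MeasurableSet (g ⁻¹' {a}) := fun a => hg (measurableSet_singleton a)
  rw [← measureReal_restrict_apply_univ, ← preimage_univ (f := g), ← Finset.coe_univ,
    ← sum_measureReal_preimage_singleton _ fun a _ => hfib a]
  simp only [measureReal_restrict_apply (hfib _)]

theorem indepSetGiven_of_forall_preimage_singleton [IsFiniteMeasure P] {α : Type*} [Fintype α]
    [MeasurableSpace α] [MeasurableSingletonClass α] {g : Ω → α} (hg : Measurable g)
    (h : ∀ a, IndepSetGiven P (g ⁻¹' {a} ∩ A) B S) : IndepSetGiven P A B S := by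
  unfold IndepSetGiven at h ⊢
  rw [measureReal_eq_sum_preimage_singleton_inter hg (A ∩ _),
    measureReal_eq_sum_preimage_singleton_inter hg (A ∩ S), Finset.sum_mul, Finset.sum_mul]
  exact Finset.sum_congr rfl fun a _ => by simpa only [inter_assoc] using h a

theorem indepSetGiven_preimage_inter [IsFiniteMeasure P] {α : Type*} [Fintype α]
    [MeasurableSpace α] [MeasurableSingletonClass α] {g : Ω → α} (hg : Measurable g) (T : Set α)
    (h : ∀ a ∈ T, IndepSetGiven P (g ⁻¹' {a} ∩ A) B S) : IndepSetGiven P (g ⁻¹' T ∩ A) B S := by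
  refine indepSetGiven_of_forall_preimage_singleton hg fun a => ?_
  by_cases ha : a ∈ T
  · rw [← inter_assoc, inter_eq_left.mpr (preimage_mono (singleton_subset_iff.mpr ha))]
    exact h a ha
  · rw [← inter_assoc, ← preimage_inter, singleton_inter_eq_empty.mpr ha, preimage_empty,
      empty_inter]
    exact indepSetGiven_empty_left

theorem IndepSetGiven.inter_right {G : Set Ω} (h : IndepSetGiven P (A ∩ G) B S)
    (hG : IndepSetGiven P G B S) (hS : P.real S ≠ 0) : IndepSetGiven P A B (G ∩ S) := by
  unfold IndepSetGiven at *
  rw [inter_left_comm B, ← inter_assoc A, ← inter_assoc A]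
  apply mul_right_cancel₀ hS
  linear_combination P.real (G ∩ S) * h - P.real (A ∩ G ∩ S) * hG

theorem IndepSetGiven.measureReal_inter_mul_comm (h : IndepSetGiven P W B S)
    (h' : IndepSetGiven P W B' S) (hS : P.real S ≠ 0) :
    P.real (W ∩ (B ∩ S)) * P.real (B' ∩ S) = P.real (W ∩ (B' ∩ S)) * P.real (B ∩ S) := by
  unfold IndepSetGiven at h h'
  apply mul_right_cancel₀ hS
  linear_combination P.real (B' ∩ S) * h - P.real (B ∩ S) * h'

theorem measureReal_inter_eq_cProb_mul_of_indepSetGiven [IsFiniteMeasure P] {F G H : Set Ω}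
    (hF : IndepSetGiven P (F ∩ (G ∩ H)) B S) (hF' : IndepSetGiven P (F ∩ (G ∩ H)) B' S)
    (hG : IndepSetGiven P (G ∩ H) B S) (hG' : IndepSetGiven P (G ∩ H) B' S)
    (hFG : IndepSetGiven P F G (H ∩ (B' ∩ S))) (hH : P.real (H ∩ (B' ∩ S)) ≠ 0) :
    P.real (H ∩ (F ∩ (G ∩ (B ∩ S))))
      = cProb P F (H ∩ (B' ∩ S)) * P.real (H ∩ (G ∩ (B ∩ S))) := by
  have hB' : P.real (B' ∩ S) ≠ 0 := fun h0 => hH (measureReal_mono_null inter_subset_right h0)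
  have hS : P.real S ≠ 0 := fun h0 => hB' (measureReal_mono_null inter_subset_right h0)
  have hswapF := hF.measureReal_inter_mul_comm hF' hS
  have hswapG := hG.measureReal_inter_mul_comm hG' hS
  unfold IndepSetGiven at hFG
  rw [← inter_assoc G, ← inter_assoc F] at hFG
  rw [inter_left_comm H F, inter_left_comm H G, ← inter_assoc G H, ← inter_assoc F (G ∩ H), cProb,
    ← measureReal_def, ← measureReal_def, div_mul_eq_mul_div, eq_div_iff hH]
  apply mul_right_cancel₀ hB'
  linear_combination P.real (H ∩ (B' ∩ S)) * hswapF + P.real (B ∩ S) * hFG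
    - P.real (F ∩ (H ∩ (B' ∩ S))) * hswapG

theorem setIntegral_mul_eq_of_measureReal_preimage_inter [IsFiniteMeasure P] {Y : Ω → ℝ}
    (hY : Measurable Y) {T : Set Ω} {a b : ℝ} (ha : 0 ≤ a) (hb : 0 ≤ b)
    (h : ∀ A, MeasurableSet A → P.real (Y ⁻¹' A ∩ S) * a = P.real (Y ⁻¹' A ∩ T) * b) :
    (∫ ω in S, Y ω ∂P) * a = (∫ ω in T, Y ω ∂P) * b := by
  have hlaw :
      ENNReal.ofReal a • (P.restrict S).map Y = ENNReal.ofReal b • (P.restrict T).map Y := by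
    ext A hA
    simp only [Measure.smul_apply, Measure.map_apply hY hA, Measure.restrict_apply (hY hA),
      smul_eq_mul]
    rw [← ofReal_measureReal, ← ofReal_measureReal, ← ENNReal.ofReal_mul ha,
      ← ENNReal.ofReal_mul hb, mul_comm a, mul_comm b, h A hA]
  have := congrArg (fun μ : Measure ℝ => ∫ y, y ∂μ) hlaw
  simp only [integral_smul_measure, ENNReal.toReal_ofReal ha, ENNReal.toReal_ofReal hb,
    smul_eq_mul] at this
  rwa [integral_map hY.aemeasurable aestronglyMeasurable_id (f := fun y => y),
    integral_map hY.aemeasurable aestronglyMeasurable_id (f := fun y => y), mul_comm a,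
    mul_comm b] at this

theorem setIntegral_inter_mul_of_indepSetGiven [IsFiniteMeasure P] {Y : Ω → ℝ}
    (hY : Measurable Y) (h : ∀ A, MeasurableSet A → IndepSetGiven P (Y ⁻¹' A ∩ W) B S) :
    (∫ ω in W ∩ (B ∩ S), Y ω ∂P) * P.real S = (∫ ω in W ∩ S, Y ω ∂P) * P.real (B ∩ S) :=
  setIntegral_mul_eq_of_measureReal_preimage_inter hY measureReal_nonneg measureReal_nonneg
    fun A hA => by simpa only [IndepSetGiven, inter_assoc] using h A hA

theorem setIntegral_inter_div_eq_of_indepSetGiven [IsFiniteMeasure P] {Y : Ω → ℝ}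
    (hY : Measurable Y) (h : ∀ A, MeasurableSet A → IndepSetGiven P (Y ⁻¹' A ∩ W) B S)
    (hBS : P.real (B ∩ S) ≠ 0) :
    (∫ ω in W ∩ (B ∩ S), Y ω ∂P) / P.real (B ∩ S) = (∫ ω in W ∩ S, Y ω ∂P) / P.real S := by
  have hS : P.real S ≠ 0 := fun h0 => hBS (measureReal_mono_null inter_subset_right h0)
  rw [div_eq_div_iff hBS hS, setIntegral_inter_mul_of_indepSetGiven hY h]

theorem setIntegral_inter_eq_cProb_mul [IsFiniteMeasure P] {Y : Ω → ℝ} (hY : Measurable Y)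
    (h : ∀ A, MeasurableSet A → IndepSetGiven P B (Y ⁻¹' A) S) (hS : P.real S ≠ 0) :
    ∫ ω in B ∩ S, Y ω ∂P = cProb P B S * ∫ ω in S, Y ω ∂P := by
  have := setIntegral_inter_mul_of_indepSetGiven (W := univ) hY fun A hA => by
    simpa only [inter_univ] using (h A hA).symm
  rw [univ_inter, univ_inter] at this
  rw [cProb, ← measureReal_def, ← measureReal_def, eq_comm, div_mul_eq_mul_div,
    div_eq_iff hS, this, mul_comm]

theorem cExp_inter_eq_of_indepSetGiven [IsFiniteMeasure P] {Y : Ω → ℝ} (hY : Measurable Y)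
    (h : ∀ A, MeasurableSet A → IndepSetGiven P B (Y ⁻¹' A) S) (hBS : P.real (B ∩ S) ≠ 0) :
    cExp P Y (B ∩ S) = cExp P Y S := by
  have hS : P.real S ≠ 0 := fun h0 => hBS (measureReal_mono_null inter_subset_right h0)
  simp only [cExp, ← measureReal_def]
  rw [setIntegral_inter_eq_cProb_mul hY h hS, cProb, ← measureReal_def, ← measureReal_def]
  field_simp

theorem setIntegral_eq_sum_preimage_singleton_inter {ℳ : Type*} [Fintype ℳ] [MeasurableSpace ℳ]
    [MeasurableSingletonClass ℳ] {M : Ω → ℳ} (hM : Measurable M) {Y : ℳ → Ω → ℝ}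
    (hY : ∀ m, Integrable (Y m) P) (S : Set Ω) :
    ∫ ω in S, Y (M ω) ω ∂P = ∑ m, ∫ ω in M ⁻¹' {m} ∩ S, Y m ω ∂P := by
  have hfib : ∀ m, MeasurableSet (M ⁻¹' {m}) := fun m => hM (measurableSet_singleton m)
  have hsplit : ∀ ω, Y (M ω) ω = ∑ m, (M ⁻¹' {m}).indicator (Y m) ω := fun ω => by
    rw [Finset.sum_eq_single_of_mem (M ω) (Finset.mem_univ _)]
    · simp
    · exact fun m _ hm => indicator_of_notMem (show ω ∉ M ⁻¹' {m} from fun h => hm h.symm) _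
  simp_rw [hsplit]
  rw [integral_finsetSum _ fun m _ => ((hY m).indicator (hfib m)).integrableOn]
  simp_rw [integral_indicator (hfib _), Measure.restrict_restrict (hfib _)]

end ConditionalIndependence

section CausalModel

variable {Ω 𝒱 ℳ 𝒞 : Type*} [MeasurableSpace Ω]

def IgnorableTreatment (P : Measure Ω) (Z : Ω → Bool) (C : Ω → 𝒞) (V : Bool → Ω → 𝒱)
    (M : Bool → Ω → ℳ) (Y : Bool → ℳ → Ω → ℝ) : Prop :=
  ∀ (za zb : Bool) (m : ℳ), ∀ A : Set ℝ, MeasurableSet A →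
    ∀ (m₁ m₂ : ℳ) (v₁ v₂ : 𝒱) (z'' : Bool) (c : 𝒞),
    0 < P {ω | C ω = c} →
    cProb P {ω | Y za m ω ∈ A ∧ M za ω = m₁ ∧ M zb ω = m₂ ∧ V za ω = v₁ ∧ V zb ω = v₂
                  ∧ Z ω = z''} {ω | C ω = c}
      = cProb P {ω | Y za m ω ∈ A ∧ M za ω = m₁ ∧ M zb ω = m₂ ∧ V za ω = v₁ ∧ V zb ω = v₂}
          {ω | C ω = c}
        * cProb P {ω | Z ω = z''} {ω | C ω = c}

def IgnorableMediator (P : Measure Ω) (Z : Ω → Bool) (C : Ω → 𝒞) (V : Bool → Ω → 𝒱)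
    (M : Bool → Ω → ℳ) (Y : Bool → ℳ → Ω → ℝ) : Prop :=
  ∀ (za zb : Bool) (m : ℳ) (v₀ : 𝒱) (c : 𝒞),
    0 < P {ω | V za ω = v₀ ∧ Z ω = za ∧ C ω = c} →
    ∀ A : Set ℝ, MeasurableSet A → ∀ (m₁ m₂ : ℳ),
    cProb P {ω | Y za m ω ∈ A ∧ M za ω = m₁ ∧ M zb ω = m₂}
        {ω | V za ω = v₀ ∧ Z ω = za ∧ C ω = c}
      = cProb P {ω | Y za m ω ∈ A} {ω | V za ω = v₀ ∧ Z ω = za ∧ C ω = c}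
        * cProb P {ω | M za ω = m₁ ∧ M zb ω = m₂} {ω | V za ω = v₀ ∧ Z ω = za ∧ C ω = c}

def CrossWorldIndependent (P : Measure Ω) (Z : Ω → Bool) (C : Ω → 𝒞) (V : Bool → Ω → 𝒱)
    (M : Bool → Ω → ℳ) (z z' : Bool) : Prop :=
  ∀ (v' : 𝒱) (c : 𝒞),
    0 < P {ω | V z' ω = v' ∧ Z ω = z' ∧ C ω = c} →
    ∀ (m' : ℳ) (v : 𝒱),
    cProb P {ω | M z' ω = m' ∧ V z ω = v} {ω | V z' ω = v' ∧ Z ω = z' ∧ C ω = c}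
      = cProb P {ω | M z' ω = m'} {ω | V z' ω = v' ∧ Z ω = z' ∧ C ω = c}
        * cProb P {ω | V z ω = v} {ω | V z' ω = v' ∧ Z ω = z' ∧ C ω = c}

variable [Fintype ℳ] [MeasurableSpace ℳ] [MeasurableSingletonClass ℳ]
  {P : Measure Ω} [IsFiniteMeasure P] {Z : Ω → Bool} {C : Ω → 𝒞} {V : Bool → Ω → 𝒱}
  {M : Bool → Ω → ℳ} {Y : Bool → ℳ → Ω → ℝ}

theorem IgnorableMediator.indepSetGiven (h2 : IgnorableMediator P Z C V M Y)
    (hM : ∀ b, Measurable (M b)) {za : Bool} {v₀ : 𝒱} {c : 𝒞}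
    (hpos : 0 < P {ω | V za ω = v₀ ∧ Z ω = za ∧ C ω = c}) (zb : Bool) (m : ℳ) {A : Set ℝ}
    (hA : MeasurableSet A) (T : Set (ℳ × ℳ)) :
    IndepSetGiven P ((fun ω => (M za ω, M zb ω)) ⁻¹' T) (Y za m ⁻¹' A)
      {ω | V za ω = v₀ ∧ Z ω = za ∧ C ω = c} := by
  rw [← inter_univ ((fun ω => (M za ω, M zb ω)) ⁻¹' T)]
  refine indepSetGiven_preimage_inter (by fun_prop) T fun ⟨m₁, m₂⟩ _ => ?_
  rw [inter_univ]
  refine (indepSetGiven_of_cProb_eq ((measureReal_ne_zero_iff).2 hpos.ne') ?_).symm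
  convert h2 za zb m v₀ c hpos A hA m₁ m₂ using 3 <;> ext ω <;> simp

variable [Fintype 𝒱] [MeasurableSpace 𝒱] [MeasurableSingletonClass 𝒱]

theorem IgnorableTreatment.indepSetGiven (h1 : IgnorableTreatment P Z C V M Y)
    (hM : ∀ b, Measurable (M b)) (hV : ∀ b, Measurable (V b)) {c : 𝒞}
    (hc : 0 < P {ω | C ω = c}) (za zb : Bool) (m : ℳ) {A : Set ℝ} (hA : MeasurableSet A)
    (T : Set (ℳ × ℳ × 𝒱 × 𝒱)) (z'' : Bool) :
    IndepSetGiven P ((fun ω => (M za ω, M zb ω, V za ω, V zb ω)) ⁻¹' T ∩ Y za m ⁻¹' A)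
      {ω | Z ω = z''} {ω | C ω = c} := by
  refine indepSetGiven_preimage_inter (by fun_prop) T fun ⟨m₁, m₂, v₁, v₂⟩ _ => ?_
  refine indepSetGiven_of_cProb_eq ((measureReal_ne_zero_iff).2 hc.ne') ?_
  convert h1 za zb m A hA m₁ m₂ v₁ v₂ z'' c hc using 3 <;> ext ω <;> simp <;> tauto

theorem IgnorableTreatment.setIntegral_div_eq_inter_treatment (h1 : IgnorableTreatment P Z C V M Y)
    (hM : ∀ b, Measurable (M b)) (hV : ∀ b, Measurable (V b)) {z : Bool} {m : ℳ}
    (hY : Measurable (Y z m)) {v : 𝒱} {c : 𝒞}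
    (hpos : 0 < P {ω | V z ω = v ∧ Z ω = z ∧ C ω = c}) (z' : Bool) :
    (∫ ω in M z' ⁻¹' {m} ∩ {ω | V z ω = v ∧ C ω = c}, Y z m ω ∂P)
        / P.real {ω | V z ω = v ∧ C ω = c}
      = (∫ ω in M z' ⁻¹' {m} ∩ {ω | V z ω = v ∧ Z ω = z ∧ C ω = c}, Y z m ω ∂P)
        / P.real {ω | V z ω = v ∧ Z ω = z ∧ C ω = c} := by
  have hc : 0 < P {ω | C ω = c} := hpos.trans_le (measure_mono fun ω hω => hω.2.2)
  have hS : P.real {ω | C ω = c} ≠ 0 := (measureReal_ne_zero_iff).2 hc.ne'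
  have hYMV : ∀ A, MeasurableSet A →
      IndepSetGiven P (Y z m ⁻¹' A ∩ M z' ⁻¹' {m} ∩ {ω | V z ω = v}) {ω | Z ω = z}
        {ω | C ω = c} := fun A hA => by
    rw [inter_assoc, inter_comm]
    exact h1.indepSetGiven hM hV hc z z' m hA {x | x.2.1 = m ∧ x.2.2.1 = v} z
  have hVZ : IndepSetGiven P {ω | V z ω = v} {ω | Z ω = z} {ω | C ω = c} := by
    simpa using h1.indepSetGiven hM hV hc z z' m .univ {x | x.2.2.1 = v} z
  have := setIntegral_inter_div_eq_of_indepSetGiven hY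
    (fun A hA => (hYMV A hA).inter_right hVZ hS) (S := {ω | V z ω = v} ∩ {ω | C ω = c})
    (by rw [inter_left_comm]; exact (measureReal_ne_zero_iff).2 hpos.ne')
  rw [inter_left_comm {ω | Z ω = z}] at this
  exact this.symm

theorem IgnorableTreatment.cProb_mediator_eq_sum (h1 : IgnorableTreatment P Z C V M Y)
    {z z' : Bool} (h3 : CrossWorldIndependent P Z C V M z z')
    (hM : ∀ b, Measurable (M b)) (hV : ∀ b, Measurable (V b)) {c : 𝒞}
    (hpos' : ∀ v', 0 < P {ω | V z' ω = v' ∧ Z ω = z' ∧ C ω = c}) (m' : ℳ) (v : 𝒱) :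
    cProb P {ω | M z' ω = m'} {ω | V z ω = v ∧ Z ω = z ∧ C ω = c}
      = ∑ v', cProb P {ω | M z' ω = m'} {ω | V z' ω = v' ∧ Z ω = z' ∧ C ω = c}
          * cProb P {ω | V z' ω = v'} {ω | V z ω = v ∧ Z ω = z ∧ C ω = c} := by
  have hc : 0 < P {ω | C ω = c} := (hpos' v).trans_le (measure_mono fun ω hω => hω.2.2)
  have hZ : ∀ T z'', IndepSetGiven P ((fun ω => (M z ω, M z' ω, V z ω, V z' ω)) ⁻¹' T)
      {ω | Z ω = z''} {ω | C ω = c} := fun T z'' => by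
    simpa using h1.indepSetGiven hM hV hc z z' m' .univ T z''
  rw [cProb, ← measureReal_def, ← measureReal_def,
    measureReal_eq_sum_preimage_singleton_inter (hV z'), Finset.sum_div]
  refine Finset.sum_congr rfl fun v' _ => ?_
  have hE := (measureReal_ne_zero_iff).2 (hpos' v').ne'
  have key := measureReal_inter_eq_cProb_mul_of_indepSetGiven (F := {ω | M z' ω = m'})
    (G := {ω | V z ω = v}) (H := {ω | V z' ω = v'})
    (hZ {x | x.2.1 = m' ∧ x.2.2.1 = v ∧ x.2.2.2 = v'} z)
    (hZ {x | x.2.1 = m' ∧ x.2.2.1 = v ∧ x.2.2.2 = v'} z')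
    (hZ {x | x.2.2.1 = v ∧ x.2.2.2 = v'} z) (hZ {x | x.2.2.1 = v ∧ x.2.2.2 = v'} z')
    (indepSetGiven_of_cProb_eq hE (h3 v' c (hpos' v') m' v)) hE
  exact (congrArg (· / _) key).trans (mul_div_assoc _ _ _)

end CausalModel

theorem crossworld_mean_identification_general
    {Ω 𝒱 ℳ 𝒞 : Type*} [MeasurableSpace Ω]
    [Fintype 𝒱] [MeasurableSpace 𝒱] [MeasurableSingletonClass 𝒱]
    [Fintype ℳ] [MeasurableSpace ℳ] [MeasurableSingletonClass ℳ]
    (P : Measure Ω) [IsProbabilityMeasure P]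
    (Z : Ω → Bool) (C : Ω → 𝒞) (V : Bool → Ω → 𝒱) (M : Bool → Ω → ℳ)
    (Y : Bool → ℳ → Ω → ℝ)
    (hV : ∀ zb, Measurable (V zb)) (hM : ∀ zb, Measurable (M zb))
    (hYmeas : ∀ zb m, Measurable (Y zb m)) (hYint : ∀ zb m, Integrable (Y zb m) P)
    (z z' : Bool)
    -- Assumption (1): ignorable treatment assignment given baseline confounders
    (h1 : ∀ (za zb : Bool) (m : ℳ), ∀ A : Set ℝ, MeasurableSet A →
      ∀ (m₁ m₂ : ℳ) (v₁ v₂ : 𝒱) (z'' : Bool) (c : 𝒞),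
      0 < P {ω | C ω = c} →
      cProb P {ω | Y za m ω ∈ A ∧ M za ω = m₁ ∧ M zb ω = m₂ ∧ V za ω = v₁ ∧ V zb ω = v₂
                    ∧ Z ω = z''} {ω | C ω = c}
        = cProb P {ω | Y za m ω ∈ A ∧ M za ω = m₁ ∧ M zb ω = m₂ ∧ V za ω = v₁ ∧ V zb ω = v₂}
            {ω | C ω = c}
          * cProb P {ω | Z ω = z''} {ω | C ω = c})
    -- Assumption (2): ignorable mediator value assignment given baseline confounders
    -- and the post-treatment confounder
    (h2 : ∀ (za zb : Bool) (m : ℳ) (v₀ : 𝒱) (c : 𝒞),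
      0 < P {ω | V za ω = v₀ ∧ Z ω = za ∧ C ω = c} →
      ∀ A : Set ℝ, MeasurableSet A → ∀ (m₁ m₂ : ℳ),
      cProb P {ω | Y za m ω ∈ A ∧ M za ω = m₁ ∧ M zb ω = m₂}
          {ω | V za ω = v₀ ∧ Z ω = za ∧ C ω = c}
        = cProb P {ω | Y za m ω ∈ A} {ω | V za ω = v₀ ∧ Z ω = za ∧ C ω = c}
          * cProb P {ω | M za ω = m₁ ∧ M zb ω = m₂} {ω | V za ω = v₀ ∧ Z ω = za ∧ C ω = c})
    -- Assumption (3): conditional cross-world independence of `V_z` and `M_{z'}`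
    (h3 : ∀ (v' : 𝒱) (c : 𝒞),
      0 < P {ω | V z' ω = v' ∧ Z ω = z' ∧ C ω = c} →
      ∀ (m' : ℳ) (v : 𝒱),
      cProb P {ω | M z' ω = m' ∧ V z ω = v} {ω | V z' ω = v' ∧ Z ω = z' ∧ C ω = c}
        = cProb P {ω | M z' ω = m'} {ω | V z' ω = v' ∧ Z ω = z' ∧ C ω = c}
          * cProb P {ω | V z ω = v} {ω | V z' ω = v' ∧ Z ω = z' ∧ C ω = c})
    (v : 𝒱) (c : 𝒞)
    (hpos : 0 < P {ω | V z ω = v ∧ Z ω = z ∧ C ω = c})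
    (hpos' : ∀ v' : 𝒱, 0 < P {ω | V z' ω = v' ∧ Z ω = z' ∧ C ω = c})
    (hposM : ∀ m' : ℳ, 0 < P {ω | M z ω = m' ∧ V z ω = v ∧ Z ω = z ∧ C ω = c}) :
    cExp P (fun ω => Y z (M z' ω) ω) {ω | V z ω = v ∧ C ω = c}
      = ∑ v' : 𝒱, ∑ m' : ℳ,
          cExp P (Y z m') {ω | M z ω = m' ∧ V z ω = v ∧ Z ω = z ∧ C ω = c}
            * cProb P {ω | M z' ω = m'} {ω | V z' ω = v' ∧ Z ω = z' ∧ C ω = c}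
            * cProb P {ω | V z' ω = v'} {ω | V z ω = v ∧ Z ω = z ∧ C ω = c} := by
  rw [cExp, setIntegral_eq_sum_preimage_singleton_inter (hM z') (hYint z), Finset.sum_div,
    Finset.sum_comm]
  refine Finset.sum_congr rfl fun m' _ => ?_
  calc (∫ ω in M z' ⁻¹' {m'} ∩ {ω | V z ω = v ∧ C ω = c}, Y z m' ω ∂P)
        / P.real {ω | V z ω = v ∧ C ω = c}
      = (∫ ω in M z' ⁻¹' {m'} ∩ {ω | V z ω = v ∧ Z ω = z ∧ C ω = c}, Y z m' ω ∂P)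
          / P.real {ω | V z ω = v ∧ Z ω = z ∧ C ω = c} :=
        IgnorableTreatment.setIntegral_div_eq_inter_treatment h1 hM hV (hYmeas z m') hpos z'
    _ = cProb P {ω | M z' ω = m'} {ω | V z ω = v ∧ Z ω = z ∧ C ω = c}
          * cExp P (Y z m') {ω | V z ω = v ∧ Z ω = z ∧ C ω = c} := by
        rw [setIntegral_inter_eq_cProb_mul (B := M z' ⁻¹' {m'}) (hYmeas z m')
          (fun A hA => IgnorableMediator.indepSetGiven h2 hM hpos z' m' hA {x | x.2 = m'})
          ((measureReal_ne_zero_iff).2 hpos.ne'),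
          mul_div_assoc]
        rfl
    _ = cProb P {ω | M z' ω = m'} {ω | V z ω = v ∧ Z ω = z ∧ C ω = c}
          * cExp P (Y z m') {ω | M z ω = m' ∧ V z ω = v ∧ Z ω = z ∧ C ω = c} := by
        rw [← cExp_inter_eq_of_indepSetGiven (B := {ω | M z ω = m'}) (hYmeas z m')
          (fun A hA => IgnorableMediator.indepSetGiven h2 hM hpos z m' hA {x | x.1 = m'})
          ((measureReal_ne_zero_iff).2 (hposM m').ne')]
        rfl
    _ = _ := by
        rw [IgnorableTreatment.cProb_mediator_eq_sum h1 h3 hM hV hpos' m' v, Finset.sum_mul]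
        exact Finset.sum_congr rfl fun v' _ => by ring

/-- Theorem 3.2 of the paper (finite-valued version): under Assumptions (1), (2) and (3),
the cross-world mean `E[Y_{z, M_{z'}} | V_z = v, C = c]` is identified. -/
theorem crossworld_mean_identification
    {Ω 𝒱 ℳ 𝒞 : Type*} [MeasurableSpace Ω]
    [Fintype 𝒱] [MeasurableSpace 𝒱] [MeasurableSingletonClass 𝒱]
    [Fintype ℳ] [MeasurableSpace ℳ] [MeasurableSingletonClass ℳ]
    [Fintype 𝒞] [MeasurableSpace 𝒞] [MeasurableSingletonClass 𝒞]
    (P : Measure Ω) [IsProbabilityMeasure P]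
    (Z : Ω → Bool) (C : Ω → 𝒞) (V : Bool → Ω → 𝒱) (M : Bool → Ω → ℳ)
    (Y : Bool → ℳ → Ω → ℝ)
    (hZ : Measurable Z) (hC : Measurable C)
    (hV : ∀ zb, Measurable (V zb)) (hM : ∀ zb, Measurable (M zb))
    (hYmeas : ∀ zb m, Measurable (Y zb m)) (hYint : ∀ zb m, Integrable (Y zb m) P)
    (z z' : Bool) (hzz' : z ≠ z')
    -- Assumption (1): ignorable treatment assignment given baseline confounders
    (h1 : ∀ (za zb : Bool) (m : ℳ), ∀ A : Set ℝ, MeasurableSet A →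
      ∀ (m₁ m₂ : ℳ) (v₁ v₂ : 𝒱) (z'' : Bool) (c : 𝒞),
      0 < P {ω | C ω = c} →
      cProb P {ω | Y za m ω ∈ A ∧ M za ω = m₁ ∧ M zb ω = m₂ ∧ V za ω = v₁ ∧ V zb ω = v₂
                    ∧ Z ω = z''} {ω | C ω = c}
        = cProb P {ω | Y za m ω ∈ A ∧ M za ω = m₁ ∧ M zb ω = m₂ ∧ V za ω = v₁ ∧ V zb ω = v₂}
            {ω | C ω = c}
          * cProb P {ω | Z ω = z''} {ω | C ω = c})
    -- Assumption (2): ignorable mediator value assignment given baseline confounders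
    -- and the post-treatment confounder
    (h2 : ∀ (za zb : Bool) (m : ℳ) (v₀ : 𝒱) (c : 𝒞),
      0 < P {ω | V za ω = v₀ ∧ Z ω = za ∧ C ω = c} →
      ∀ A : Set ℝ, MeasurableSet A → ∀ (m₁ m₂ : ℳ),
      cProb P {ω | Y za m ω ∈ A ∧ M za ω = m₁ ∧ M zb ω = m₂}
          {ω | V za ω = v₀ ∧ Z ω = za ∧ C ω = c}
        = cProb P {ω | Y za m ω ∈ A} {ω | V za ω = v₀ ∧ Z ω = za ∧ C ω = c}
          * cProb P {ω | M za ω = m₁ ∧ M zb ω = m₂} {ω | V za ω = v₀ ∧ Z ω = za ∧ C ω = c})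
    -- Assumption (3): conditional cross-world independence of `V_z` and `M_{z'}`
    (h3 : ∀ (v' : 𝒱) (c : 𝒞),
      0 < P {ω | V z' ω = v' ∧ Z ω = z' ∧ C ω = c} →
      ∀ (m' : ℳ) (v : 𝒱),
      cProb P {ω | M z' ω = m' ∧ V z ω = v} {ω | V z' ω = v' ∧ Z ω = z' ∧ C ω = c}
        = cProb P {ω | M z' ω = m'} {ω | V z' ω = v' ∧ Z ω = z' ∧ C ω = c}
          * cProb P {ω | V z ω = v} {ω | V z' ω = v' ∧ Z ω = z' ∧ C ω = c})
    (v : 𝒱) (c : 𝒞)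
    (hpos : 0 < P {ω | V z ω = v ∧ Z ω = z ∧ C ω = c})
    (hpos' : ∀ v' : 𝒱, 0 < P {ω | V z' ω = v' ∧ Z ω = z' ∧ C ω = c})
    (hposM : ∀ m' : ℳ, 0 < P {ω | M z ω = m' ∧ V z ω = v ∧ Z ω = z ∧ C ω = c}) :
    cExp P (fun ω => Y z (M z' ω) ω) {ω | V z ω = v ∧ C ω = c}
      = ∑ v' : 𝒱, ∑ m' : ℳ,
          cExp P (Y z m') {ω | M z ω = m' ∧ V z ω = v ∧ Z ω = z ∧ C ω = c}
            * cProb P {ω | M z' ω = m'} {ω | V z' ω = v' ∧ Z ω = z' ∧ C ω = c}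
            * cProb P {ω | V z' ω = v'} {ω | V z ω = v ∧ Z ω = z ∧ C ω = c} :=
  crossworld_mean_identification_general P Z C V M Y hV hM hYmeas hYint z z' h1 h2 h3 v c hpos hpos'
    hposM
end

section
/- Fix z, z' ∈ {0,1} with z ≠ z'. Assume Assumptions (1), (2) and (3), and fix v ∈ 𝒱 and c ∈ 𝒞 such that P(V_z = v, Z = z, C = c) > 0, such that P(V_{z'} = v', Z = z', C = c) > 0 for every v' ∈ 𝒱, and such that P(M_z = m', V_z = v, Z = z, C = c) > 0 for every m' ∈ ℳ. Define the mediator probability ratio ψ(m', v, v', c) = P(M_{z'} = m' | V_{z'} = v', Z = z', C = c) / P(M_z = m' | V_z = v, Z = z, C = c). Then E[Y_{z,M_{z'}} | V_z = v, C = c] = Σ_{v' ∈ 𝒱} Σ_{m' ∈ ℳ} ψ(m', v, v', c) · E[Y_{z,m'} | M_z = m', V_z = v, Z = z, C = c] · P(M_z = m' | V_z = v, Z = z, C = c) · P(V_{z'} = v' | V_z = v, Z = z, C = c). -/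
open MeasureTheory ProbabilityTheory

/-!
Write `B = {V_z = v, Z = z, C = c}` and `B'_{v'} = {V_{z'} = v', Z = z', C = c}`. Splitting on
the value `m'` of `M_{z'}`, the left side is `∑ m', E[Y_{z,m'} 1{M_{z'} = m'} | V_z = v, C = c]`.
By (1), further conditioning on `Z = z` leaves the conditional law of
`(Y_{z,m'}, M_z, M_{z'}, V_z, V_{z'})` given `C = c` unchanged, so the conditioning event becomes
`B`; by (2) the summand then factors as `E[Y_{z,m'} | M_z = m', B] · P(M_{z'} = m' | B)`.
Splitting on `V_{z'}`, assumption (1) (passing from `Z = z` to `Z = z'`) and (3) give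
`P(M_{z'} = m', V_{z'} = v' | B) = P(M_{z'} = m' | B'_{v'}) · P(V_{z'} = v' | B)`, and the
weight `ψ` cancels against `P(M_z = m' | B)`.
-/

open scoped ENNReal

section General

variable {Ω α : Type*} [MeasurableSpace Ω] {P : Measure Ω}

lemma cProb_ne_zero [IsFiniteMeasure P] {A B : Set Ω} (h : P (A ∩ B) ≠ 0) : cProb P A B ≠ 0 := by
  have hB : P B ≠ 0 := fun h0 => h (measure_mono_null Set.inter_subset_right h0)
  rw [cProb, ← measureReal_def, ← measureReal_def]
  exact div_ne_zero ((measureReal_ne_zero_iff).2 h) ((measureReal_ne_zero_iff).2 hB)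

lemma cProb_inter_right [IsFiniteMeasure P] (E F G : Set Ω) :
    cProb P E (F ∩ G) = cProb P (E ∩ F) G / cProb P F G := by
  simp only [cProb, ← measureReal_def]
  by_cases hG : P.real G = 0
  · have hFG : P.real (F ∩ G) = 0 :=
      le_antisymm (hG ▸ measureReal_mono Set.inter_subset_right) measureReal_nonneg
    simp [hG, hFG]
  · rw [div_div_div_cancel_right₀ hG, Set.inter_assoc]

lemma cProb_eq_sum_preimage_singleton_inter [IsFiniteMeasure P] [MeasurableSpace α] [Fintype α]
    [MeasurableSingletonClass α] {N : Ω → α} (hN : Measurable N) (E B : Set Ω) :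
    cProb P E B = ∑ a, cProb P (N ⁻¹' {a} ∩ E) B := by
  have hsum := sum_measureReal_preimage_singleton (μ := P.restrict (E ∩ B)) Finset.univ
    fun a _ => hN (measurableSet_singleton a)
  simp only [measureReal_restrict_apply (hN (measurableSet_singleton _)), Finset.coe_univ,
    Set.preimage_univ, measureReal_restrict_apply_univ] at hsum
  simp only [cProb, ← measureReal_def, ← Finset.sum_div, Set.inter_assoc, hsum]

lemma measure_inter_mul_eq_of_cProb_eq_mul [IsFiniteMeasure P] {S₁ S₂ S₃ B : Set Ω}
    (hB : P B ≠ 0) (h : cProb P S₁ B = cProb P S₂ B * cProb P S₃ B) :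
    P (S₁ ∩ B) * P B = P (S₂ ∩ B) * P (S₃ ∩ B) := by
  have hB' : P.real B ≠ 0 := (measureReal_ne_zero_iff).2 hB
  simp only [cProb, ← measureReal_def] at h
  rw [← ENNReal.toReal_eq_toReal_iff' (by finiteness) (by finiteness), ENNReal.toReal_mul,
    ENNReal.toReal_mul]
  simp only [← measureReal_def]
  field_simp at h
  linear_combination h

lemma measure_preimage_inter_mul_eq_of_forall_singleton [MeasurableSpace α] [Countable α]
    [MeasurableSingletonClass α] {W : Ω → α} (hW : Measurable W) {F₁ F₂ : Set Ω} {b₁ b₂ : ℝ≥0∞}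
    (h : ∀ a, P (W ⁻¹' {a} ∩ F₁) * b₁ = P (W ⁻¹' {a} ∩ F₂) * b₂) (s : Set α) :
    P (W ⁻¹' s ∩ F₁) * b₁ = P (W ⁻¹' s ∩ F₂) * b₂ := by
  have hlaw : b₁ • (P.restrict F₁).map W = b₂ • (P.restrict F₂).map W :=
    Measure.ext_of_singleton fun a => by
      simpa [Measure.map_apply hW (measurableSet_singleton a),
        Measure.restrict_apply (hW (measurableSet_singleton a)), mul_comm] using h a
  simpa [Measure.map_apply hW s.to_countable.measurableSet,
    Measure.restrict_apply (hW s.to_countable.measurableSet), mul_comm]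
    using congrArg (· s) hlaw

lemma setIntegral_mul_eq_of_measure_preimage_inter_mul_eq {Y : Ω → ℝ} (hY : AEMeasurable Y P)
    {E₁ E₂ : Set Ω} (hE₁ : MeasurableSet E₁) (hE₂ : MeasurableSet E₂) {b₁ b₂ : ℝ≥0∞}
    (h : ∀ A, MeasurableSet A → P (Y ⁻¹' A ∩ E₁) * b₁ = P (Y ⁻¹' A ∩ E₂) * b₂) :
    (∫ ω in E₁, Y ω ∂P) * b₁.toReal = (∫ ω in E₂, Y ω ∂P) * b₂.toReal := by
  have hlaw : b₁ • (P.restrict E₁).map Y = b₂ • (P.restrict E₂).map Y := by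
    ext A hA
    simpa [Measure.map_apply_of_aemeasurable hY.restrict hA, Measure.restrict_apply' hE₁,
      Measure.restrict_apply' hE₂, mul_comm] using h A hA
  have hmean (E : Set Ω) : ∫ x, x ∂((P.restrict E).map Y) = ∫ ω in E, Y ω ∂P :=
    integral_map hY.restrict aestronglyMeasurable_id
  have hint := congrArg (fun μ : Measure ℝ => ∫ x, x ∂μ) hlaw
  simp only [integral_smul_measure, hmean, smul_eq_mul] at hint
  linarith

lemma cExp_comp_eq_sum_indicator [MeasurableSpace α] [Fintype α] [MeasurableSingletonClass α]
    {N : Ω → α} (hN : Measurable N) {f : α → Ω → ℝ} {D : Set Ω}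
    (hf : ∀ a, IntegrableOn (f a) D P) :
    cExp P (fun ω => f (N ω) ω) D = ∑ a, cExp P ((N ⁻¹' {a}).indicator (f a)) D := by
  have hpoint : (fun ω => f (N ω) ω) = fun ω => ∑ a, (N ⁻¹' {a}).indicator (f a) ω := by
    ext ω
    classical
    simp [Set.indicator_apply]
  rw [cExp, hpoint, integral_finsetSum _ fun a _ =>
    (hf a).indicator (hN (measurableSet_singleton a)), Finset.sum_div]
  rfl

lemma cProb_preimage_inter_eq_mul_of_cProb_eq [IsFiniteMeasure P] {W : Ω → α} {G G' : Set Ω}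
    (hGG' : ∀ s, cProb P (W ⁻¹' s) G = cProb P (W ⁻¹' s) G') {s₁ s₂ s₃ : Set α}
    (h₂ : P (W ⁻¹' s₂ ∩ G') ≠ 0)
    (h : cProb P (W ⁻¹' (s₁ ∩ s₃)) (W ⁻¹' s₂ ∩ G')
      = cProb P (W ⁻¹' s₁) (W ⁻¹' s₂ ∩ G') * cProb P (W ⁻¹' s₃) (W ⁻¹' s₂ ∩ G')) :
    cProb P (W ⁻¹' (s₂ ∩ s₁)) (W ⁻¹' s₃ ∩ G)
      = cProb P (W ⁻¹' s₁) (W ⁻¹' s₂ ∩ G') * cProb P (W ⁻¹' s₂) (W ⁻¹' s₃ ∩ G) := by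
  have hq₂ : cProb P (W ⁻¹' s₂) G' ≠ 0 := cProb_ne_zero h₂
  simp only [cProb_inter_right, ← Set.preimage_inter, hGG'] at h ⊢
  simp only [Set.inter_comm, Set.inter_left_comm] at h ⊢
  field_simp at h ⊢
  rw [h]

end General

section CondIndep

variable {Ω α : Type*} [MeasurableSpace Ω] [MeasurableSpace α] [Countable α]
  [MeasurableSingletonClass α] {P : Measure Ω} {Y : Ω → ℝ} {W : Ω → α}

/-- `(Y, W)` is independent of the event `T` given the event `K`; as `W` is discrete, it is
enough to test the events `{W = a}`. -/
def CondIndepEvent (P : Measure Ω) (Y : Ω → ℝ) (W : Ω → α) (T K : Set Ω) : Prop :=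
  ∀ A, MeasurableSet A → ∀ a, P (W ⁻¹' {a} ∩ (Y ⁻¹' A ∩ (T ∩ K))) * P K
    = P (W ⁻¹' {a} ∩ (Y ⁻¹' A ∩ K)) * P (T ∩ K)

def CondIndepFunGiven (P : Measure Ω) (Y : Ω → ℝ) (W : Ω → α) (B : Set Ω) : Prop :=
  ∀ A, MeasurableSet A → ∀ a, P (W ⁻¹' {a} ∩ (Y ⁻¹' A ∩ B)) * P B
    = P (W ⁻¹' {a} ∩ B) * P (Y ⁻¹' A ∩ B)

section Event

variable {T K : Set Ω}

lemma CondIndepEvent.measure_preimage_inter_mul_eq (hW : Measurable W)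
    (h : CondIndepEvent P Y W T K) (s : Set α) :
    P (W ⁻¹' s ∩ (T ∩ K)) * P K = P (W ⁻¹' s ∩ K) * P (T ∩ K) := by
  simpa using measure_preimage_inter_mul_eq_of_forall_singleton hW (h Set.univ .univ) s

lemma CondIndepEvent.cProb_preimage_eq [IsFiniteMeasure P] (hW : Measurable W)
    (h : CondIndepEvent P Y W T K) (hTK : P (T ∩ K) ≠ 0) (s : Set α) :
    cProb P (W ⁻¹' s) (T ∩ K) = cProb P (W ⁻¹' s) K := by
  have hK : P K ≠ 0 := fun h0 => hTK (measure_mono_null Set.inter_subset_right h0)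
  have hreal := congrArg ENNReal.toReal (h.measure_preimage_inter_mul_eq hW s)
  simp only [ENNReal.toReal_mul, ← measureReal_def] at hreal
  rw [cProb, cProb, ← measureReal_def, ← measureReal_def, ← measureReal_def, ← measureReal_def,
    div_eq_div_iff ((measureReal_ne_zero_iff).2 hTK) ((measureReal_ne_zero_iff).2 hK), hreal]

lemma CondIndepEvent.cExp_indicator_preimage_eq [IsFiniteMeasure P] (hW : Measurable W)
    (hY : AEMeasurable Y P) (hT : MeasurableSet T) (hK : MeasurableSet K)
    (h : CondIndepEvent P Y W T K) (hTK : P (T ∩ K) ≠ 0) (s t : Set α) :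
    cExp P ((W ⁻¹' s).indicator Y) (W ⁻¹' t ∩ K)
      = cExp P ((W ⁻¹' s).indicator Y) (W ⁻¹' t ∩ (T ∩ K)) := by
  have hWm (u : Set α) : MeasurableSet (W ⁻¹' u) := hW u.to_countable.measurableSet
  have hK0 : P K ≠ 0 := fun h0 => hTK (measure_mono_null Set.inter_subset_right h0)
  have hint : (∫ ω in W ⁻¹' (t ∩ s) ∩ (T ∩ K), Y ω ∂P) * P.real K
      = (∫ ω in W ⁻¹' (t ∩ s) ∩ K, Y ω ∂P) * P.real (T ∩ K) :=
    setIntegral_mul_eq_of_measure_preimage_inter_mul_eq hY ((hWm _).inter (hT.inter hK))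
      ((hWm _).inter hK) fun A hA => by
        simpa only [Set.inter_left_comm] using
          measure_preimage_inter_mul_eq_of_forall_singleton hW (h A hA) (t ∩ s)
  have hmeas := congrArg ENNReal.toReal (h.measure_preimage_inter_mul_eq hW t)
  simp only [ENNReal.toReal_mul, ← measureReal_def] at hmeas
  have hsplit (G : Set Ω) : W ⁻¹' t ∩ G ∩ W ⁻¹' s = W ⁻¹' (t ∩ s) ∩ G := by
    rw [Set.inter_right_comm, Set.preimage_inter]
  rw [cExp, cExp, setIntegral_indicator (hWm s), setIntegral_indicator (hWm s), hsplit, hsplit,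
    ← measureReal_def, ← measureReal_def,
    ← mul_div_mul_right _ _ ((measureReal_ne_zero_iff).2 hTK), ← hint, ← hmeas,
    mul_div_mul_right _ _ ((measureReal_ne_zero_iff).2 hK0)]

end Event

section Fun

variable {B : Set Ω}

lemma CondIndepFunGiven.setIntegral_inter_preimage_mul_eq (hW : Measurable W)
    (hY : AEMeasurable Y P) (hB : MeasurableSet B) (h : CondIndepFunGiven P Y W B) (s : Set α) :
    (∫ ω in B ∩ W ⁻¹' s, Y ω ∂P) * P.real B = (∫ ω in B, Y ω ∂P) * P.real (W ⁻¹' s ∩ B) :=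
  setIntegral_mul_eq_of_measure_preimage_inter_mul_eq hY
    (hB.inter (hW s.to_countable.measurableSet)) hB fun A hA => by
      rw [mul_comm (P (Y ⁻¹' A ∩ B)), Set.inter_comm B, Set.inter_left_comm]
      exact measure_preimage_inter_mul_eq_of_forall_singleton hW (h A hA) s

lemma CondIndepFunGiven.cExp_indicator_preimage_eq_mul [IsFiniteMeasure P] (hW : Measurable W)
    (hY : AEMeasurable Y P) (hB : MeasurableSet B) (h : CondIndepFunGiven P Y W B)
    (hB0 : P B ≠ 0) (s : Set α) :
    cExp P ((W ⁻¹' s).indicator Y) B = cExp P Y B * cProb P (W ⁻¹' s) B := by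
  rw [cExp, cExp, cProb, setIntegral_indicator (hW s.to_countable.measurableSet),
    ← measureReal_def, ← measureReal_def, div_mul_div_comm,
    ← h.setIntegral_inter_preimage_mul_eq hW hY hB s,
    mul_div_mul_right _ _ ((measureReal_ne_zero_iff).2 hB0)]

lemma CondIndepFunGiven.cExp_preimage_inter_eq [IsFiniteMeasure P] (hW : Measurable W)
    (hY : AEMeasurable Y P) (hB : MeasurableSet B) (h : CondIndepFunGiven P Y W B) {s : Set α}
    (hsB : P (W ⁻¹' s ∩ B) ≠ 0) :
    cExp P Y (W ⁻¹' s ∩ B) = cExp P Y B := by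
  have hB0 : P B ≠ 0 := fun h0 => hsB (measure_mono_null Set.inter_subset_right h0)
  rw [cExp, cExp, ← measureReal_def, ← measureReal_def, Set.inter_comm,
    div_eq_div_iff ((measureReal_ne_zero_iff).2 (Set.inter_comm B _ ▸ hsB))
      ((measureReal_ne_zero_iff).2 hB0),
    h.setIntegral_inter_preimage_mul_eq hW hY hB s, Set.inter_comm]

end Fun

end CondIndep

theorem crossworld_mean_rmpw_representation_general
    {Ω 𝒱 ℳ 𝒞 : Type*} [MeasurableSpace Ω]
    [Fintype 𝒱] [MeasurableSpace 𝒱] [MeasurableSingletonClass 𝒱]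
    [Fintype ℳ] [MeasurableSpace ℳ] [MeasurableSingletonClass ℳ]
    [MeasurableSpace 𝒞] [MeasurableSingletonClass 𝒞]
    (P : Measure Ω) [IsProbabilityMeasure P]
    (Z : Ω → Bool) (C : Ω → 𝒞) (V : Bool → Ω → 𝒱) (M : Bool → Ω → ℳ)
    (Y : Bool → ℳ → Ω → ℝ)
    (hZ : Measurable Z) (hC : Measurable C)
    (hV : ∀ zb, Measurable (V zb)) (hM : ∀ zb, Measurable (M zb))
    (hYint : ∀ zb m, Integrable (Y zb m) P)
    (z z' : Bool)
    -- Assumption (1): ignorable treatment assignment given baseline confounders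
    (h1 : ∀ (za zb : Bool) (m : ℳ), ∀ A : Set ℝ, MeasurableSet A →
      ∀ (m₁ m₂ : ℳ) (v₁ v₂ : 𝒱) (z'' : Bool) (c : 𝒞),
      0 < P {ω | C ω = c} →
      cProb P {ω | Y za m ω ∈ A ∧ M za ω = m₁ ∧ M zb ω = m₂ ∧ V za ω = v₁ ∧ V zb ω = v₂
                    ∧ Z ω = z''} {ω | C ω = c}
        = cProb P {ω | Y za m ω ∈ A ∧ M za ω = m₁ ∧ M zb ω = m₂ ∧ V za ω = v₁ ∧ V zb ω = v₂}
            {ω | C ω = c}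
          * cProb P {ω | Z ω = z''} {ω | C ω = c})
    -- Assumption (2): ignorable mediator value assignment given baseline confounders
    -- and the post-treatment confounder
    (h2 : ∀ (za zb : Bool) (m : ℳ) (v₀ : 𝒱) (c : 𝒞),
      0 < P {ω | V za ω = v₀ ∧ Z ω = za ∧ C ω = c} →
      ∀ A : Set ℝ, MeasurableSet A → ∀ (m₁ m₂ : ℳ),
      cProb P {ω | Y za m ω ∈ A ∧ M za ω = m₁ ∧ M zb ω = m₂}
          {ω | V za ω = v₀ ∧ Z ω = za ∧ C ω = c}
        = cProb P {ω | Y za m ω ∈ A} {ω | V za ω = v₀ ∧ Z ω = za ∧ C ω = c}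
          * cProb P {ω | M za ω = m₁ ∧ M zb ω = m₂} {ω | V za ω = v₀ ∧ Z ω = za ∧ C ω = c})
    -- Assumption (3): conditional cross-world independence of `V_z` and `M_{z'}`
    (h3 : ∀ (v' : 𝒱) (c : 𝒞),
      0 < P {ω | V z' ω = v' ∧ Z ω = z' ∧ C ω = c} →
      ∀ (m' : ℳ) (v : 𝒱),
      cProb P {ω | M z' ω = m' ∧ V z ω = v} {ω | V z' ω = v' ∧ Z ω = z' ∧ C ω = c}
        = cProb P {ω | M z' ω = m'} {ω | V z' ω = v' ∧ Z ω = z' ∧ C ω = c}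
          * cProb P {ω | V z ω = v} {ω | V z' ω = v' ∧ Z ω = z' ∧ C ω = c})
    (v : 𝒱) (c : 𝒞)
    (hpos : 0 < P {ω | V z ω = v ∧ Z ω = z ∧ C ω = c})
    (hpos' : ∀ v' : 𝒱, 0 < P {ω | V z' ω = v' ∧ Z ω = z' ∧ C ω = c})
    (hposM : ∀ m' : ℳ, 0 < P {ω | M z ω = m' ∧ V z ω = v ∧ Z ω = z ∧ C ω = c}) :
    -- the factor `cProb … / cProb …` is the mediator probability ratio `ψ (m', v, v', c)`
    cExp P (fun ω => Y z (M z' ω) ω) {ω | V z ω = v ∧ C ω = c}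
      = ∑ v' : 𝒱, ∑ m' : ℳ,
          (cProb P {ω | M z' ω = m'} {ω | V z' ω = v' ∧ Z ω = z' ∧ C ω = c}
              / cProb P {ω | M z ω = m'} {ω | V z ω = v ∧ Z ω = z ∧ C ω = c})
            * cExp P (Y z m') {ω | M z ω = m' ∧ V z ω = v ∧ Z ω = z ∧ C ω = c}
            * cProb P {ω | M z ω = m'} {ω | V z ω = v ∧ Z ω = z ∧ C ω = c}
            * cProb P {ω | V z' ω = v'} {ω | V z ω = v ∧ Z ω = z ∧ C ω = c} := by
  set K := {ω | C ω = c}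
  set B := {ω | V z ω = v ∧ Z ω = z ∧ C ω = c}
  set W : Ω → ℳ × ℳ × 𝒱 × 𝒱 := fun ω => (M z ω, M z' ω, V z ω, V z' ω)
  set N : Ω → ℳ × ℳ := fun ω => (M z ω, M z' ω)
  have hK : MeasurableSet K := hC (measurableSet_singleton c)
  have hT (b : Bool) : MeasurableSet {ω | Z ω = b} := hZ (measurableSet_singleton b)
  have hW : Measurable W := (hM z).prodMk ((hM z').prodMk ((hV z).prodMk (hV z')))
  have hN : Measurable N := (hM z).prodMk (hM z')
  have hB : MeasurableSet B := (hV z (measurableSet_singleton v)).inter ((hT z).inter hK)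
  have hTK : P ({ω | Z ω = z} ∩ K) ≠ 0 := fun h0 =>
    hpos.ne' (measure_mono_null (fun _ hω => hω.2) h0)
  have hT'K : P ({ω | Z ω = z'} ∩ K) ≠ 0 := fun h0 =>
    (hpos' v).ne' (measure_mono_null (fun _ hω => hω.2) h0)
  have hKpos : 0 < P K :=
    pos_iff_ne_zero.2 fun h0 => hTK (measure_mono_null Set.inter_subset_right h0)
  have hind₁ (m : ℳ) (b : Bool) : CondIndepEvent P (Y z m) W {ω | Z ω = b} K := by
    rintro A hA ⟨m₁, m₂, v₁, v₂⟩
    convert measure_inter_mul_eq_of_cProb_eq_mul hKpos.ne'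
      (h1 z z' m A hA m₁ m₂ v₁ v₂ b c hKpos) using 3 <;> ext ω <;> simp [W, K] <;> tauto
  have hind₂ (m : ℳ) : CondIndepFunGiven P (Y z m) N B := by
    rintro A hA ⟨m₁, m₂⟩
    rw [mul_comm (P (N ⁻¹' _ ∩ B))]
    convert measure_inter_mul_eq_of_cProb_eq_mul hpos.ne' (h2 z z' m v c hpos A hA m₁ m₂)
      using 3 <;> ext ω <;> simp [N, B]
    tauto
  have hZZ' (m : ℳ) (s : Set (ℳ × ℳ × 𝒱 × 𝒱)) :
      cProb P (W ⁻¹' s) ({ω | Z ω = z} ∩ K) = cProb P (W ⁻¹' s) ({ω | Z ω = z'} ∩ K) := by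
    rw [(hind₁ m z).cProb_preimage_eq hW hTK, (hind₁ m z').cProb_preimage_eq hW hT'K]
  calc cExp P (fun ω => Y z (M z' ω) ω) {ω | V z ω = v ∧ C ω = c}
      = ∑ m', cExp P ({ω | M z' ω = m'}.indicator (Y z m')) {ω | V z ω = v ∧ C ω = c} :=
        cExp_comp_eq_sum_indicator (hM z') fun m => (hYint z m).integrableOn
    _ = ∑ m', cExp P ({ω | M z' ω = m'}.indicator (Y z m')) B :=
        Finset.sum_congr rfl fun m' _ => (hind₁ m' z).cExp_indicator_preimage_eq hW
          (hYint z m').aemeasurable (hT z) hK hTK {w | w.2.1 = m'} {w | w.2.2.1 = v}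
    _ = ∑ m', cExp P (Y z m') B * cProb P {ω | M z' ω = m'} B :=
        Finset.sum_congr rfl fun m' _ => (hind₂ m').cExp_indicator_preimage_eq_mul hN
          (hYint z m').aemeasurable hB hpos.ne' {n | n.2 = m'}
    _ = ∑ m', cExp P (Y z m') B * ∑ v', cProb P {ω | M z' ω = m'}
          {ω | V z' ω = v' ∧ Z ω = z' ∧ C ω = c} * cProb P {ω | V z' ω = v'} B := by
        refine Finset.sum_congr rfl fun m' _ => congrArg _ ?_
        rw [cProb_eq_sum_preimage_singleton_inter (hV z')]
        exact Finset.sum_congr rfl fun v' _ => cProb_preimage_inter_eq_mul_of_cProb_eq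
          (s₁ := {w | w.2.1 = m'}) (s₂ := {w | w.2.2.2 = v'}) (s₃ := {w | w.2.2.1 = v})
          (hZZ' m') (hpos' v').ne' (h3 v' c (hpos' v') m' v)
    _ = _ := by
        simp only [Finset.mul_sum]
        rw [Finset.sum_comm]
        refine Finset.sum_congr rfl fun v' _ => Finset.sum_congr rfl fun m' _ => ?_
        have hE : cExp P (Y z m') {ω | M z ω = m' ∧ V z ω = v ∧ Z ω = z ∧ C ω = c}
            = cExp P (Y z m') B := (hind₂ m').cExp_preimage_inter_eq (s := {n | n.1 = m'}) hN
          (hYint z m').aemeasurable hB (hposM m').ne'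
        have hq : cProb P {ω | M z ω = m'} B ≠ 0 := cProb_ne_zero (hposM m').ne'
        rw [hE]
        field_simp

/-- The ratio-of-mediator-probability-weighting (RMPW) representation: under Assumptions (1),
(2) and (3), the cross-world mean is a weighted average with mediator probability ratio `ψ`. -/
theorem crossworld_mean_rmpw_representation
    {Ω 𝒱 ℳ 𝒞 : Type*} [MeasurableSpace Ω]
    [Fintype 𝒱] [MeasurableSpace 𝒱] [MeasurableSingletonClass 𝒱]
    [Fintype ℳ] [MeasurableSpace ℳ] [MeasurableSingletonClass ℳ]
    [Fintype 𝒞] [MeasurableSpace 𝒞] [MeasurableSingletonClass 𝒞]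
    (P : Measure Ω) [IsProbabilityMeasure P]
    (Z : Ω → Bool) (C : Ω → 𝒞) (V : Bool → Ω → 𝒱) (M : Bool → Ω → ℳ)
    (Y : Bool → ℳ → Ω → ℝ)
    (hZ : Measurable Z) (hC : Measurable C)
    (hV : ∀ zb, Measurable (V zb)) (hM : ∀ zb, Measurable (M zb))
    (hYmeas : ∀ zb m, Measurable (Y zb m)) (hYint : ∀ zb m, Integrable (Y zb m) P)
    (z z' : Bool) (hzz' : z ≠ z')
    -- Assumption (1): ignorable treatment assignment given baseline confounders
    (h1 : ∀ (za zb : Bool) (m : ℳ), ∀ A : Set ℝ, MeasurableSet A →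
      ∀ (m₁ m₂ : ℳ) (v₁ v₂ : 𝒱) (z'' : Bool) (c : 𝒞),
      0 < P {ω | C ω = c} →
      cProb P {ω | Y za m ω ∈ A ∧ M za ω = m₁ ∧ M zb ω = m₂ ∧ V za ω = v₁ ∧ V zb ω = v₂
                    ∧ Z ω = z''} {ω | C ω = c}
        = cProb P {ω | Y za m ω ∈ A ∧ M za ω = m₁ ∧ M zb ω = m₂ ∧ V za ω = v₁ ∧ V zb ω = v₂}
            {ω | C ω = c}
          * cProb P {ω | Z ω = z''} {ω | C ω = c})
    -- Assumption (2): ignorable mediator value assignment given baseline confounders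
    -- and the post-treatment confounder
    (h2 : ∀ (za zb : Bool) (m : ℳ) (v₀ : 𝒱) (c : 𝒞),
      0 < P {ω | V za ω = v₀ ∧ Z ω = za ∧ C ω = c} →
      ∀ A : Set ℝ, MeasurableSet A → ∀ (m₁ m₂ : ℳ),
      cProb P {ω | Y za m ω ∈ A ∧ M za ω = m₁ ∧ M zb ω = m₂}
          {ω | V za ω = v₀ ∧ Z ω = za ∧ C ω = c}
        = cProb P {ω | Y za m ω ∈ A} {ω | V za ω = v₀ ∧ Z ω = za ∧ C ω = c}
          * cProb P {ω | M za ω = m₁ ∧ M zb ω = m₂} {ω | V za ω = v₀ ∧ Z ω = za ∧ C ω = c})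
    -- Assumption (3): conditional cross-world independence of `V_z` and `M_{z'}`
    (h3 : ∀ (v' : 𝒱) (c : 𝒞),
      0 < P {ω | V z' ω = v' ∧ Z ω = z' ∧ C ω = c} →
      ∀ (m' : ℳ) (v : 𝒱),
      cProb P {ω | M z' ω = m' ∧ V z ω = v} {ω | V z' ω = v' ∧ Z ω = z' ∧ C ω = c}
        = cProb P {ω | M z' ω = m'} {ω | V z' ω = v' ∧ Z ω = z' ∧ C ω = c}
          * cProb P {ω | V z ω = v} {ω | V z' ω = v' ∧ Z ω = z' ∧ C ω = c})
    (v : 𝒱) (c : 𝒞)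
    (hpos : 0 < P {ω | V z ω = v ∧ Z ω = z ∧ C ω = c})
    (hpos' : ∀ v' : 𝒱, 0 < P {ω | V z' ω = v' ∧ Z ω = z' ∧ C ω = c})
    (hposM : ∀ m' : ℳ, 0 < P {ω | M z ω = m' ∧ V z ω = v ∧ Z ω = z ∧ C ω = c}) :
    -- the factor `cProb … / cProb …` is the mediator probability ratio `ψ (m', v, v', c)`
    cExp P (fun ω => Y z (M z' ω) ω) {ω | V z ω = v ∧ C ω = c}
      = ∑ v' : 𝒱, ∑ m' : ℳ,
          (cProb P {ω | M z' ω = m'} {ω | V z' ω = v' ∧ Z ω = z' ∧ C ω = c}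
              / cProb P {ω | M z ω = m'} {ω | V z ω = v ∧ Z ω = z ∧ C ω = c})
            * cExp P (Y z m') {ω | M z ω = m' ∧ V z ω = v ∧ Z ω = z ∧ C ω = c}
            * cProb P {ω | M z ω = m'} {ω | V z ω = v ∧ Z ω = z ∧ C ω = c}
            * cProb P {ω | V z' ω = v'} {ω | V z ω = v ∧ Z ω = z ∧ C ω = c} :=
  crossworld_mean_rmpw_representation_general P Z C V M Y hZ hC hV hM hYint z z' h1 h2 h3 v c hpos
    hpos' hposM
end
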